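/- Let m > 0 and define Ω : ℂ → ℂ by Ω(w) = exp(−2 cosh(2π² w / m)). Then for every w ∈ S_m, writing w = u + iv with u, v ∈ ℝ, one has |Ω(w)| = exp(−2 · cos(2π² v / m) · cosh(2π² u / m)), and cos(2π² v / m) > 0. Consequently, for each fixed w ∈ S_m there exist β > 0 and C > 0 such that |Ω(w + j)| ≤ C · exp(−β · e^{(2π²/m)|j|}) for all j ∈ ℤ. -/

import Mathlib

noncomputable section

/-- The horizontal strip `S_m = {w : |Im w| < m/(4π)}`. -/
def Sm (m : ℝ) : Set ℂ := {w : ℂ | |w.im| < m / (4 * Real.pi)}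

/-- The set `(ℂ*)^d` of vectors with all coordinates nonzero. -/
def torusPart (d : ℕ) : Set (Fin d → ℂ) := {z | ∀ i, z i ≠ 0}

/-- The multiplicative action of an integer matrix on `(ℂ*)^d`:
`φ_M(z)_i = ∏_j z_j ^ M_{ij}`. -/
def phiM {d : ℕ} (M : Matrix (Fin d) (Fin d) ℤ) (z : Fin d → ℂ) : Fin d → ℂ :=
  fun i => ∏ j, z j ^ (M i j)

/-- The monomial `z^k = ∏_i z_i ^ k_i` for a row vector `k ∈ ℤ^d`. -/
def zpowVec {d : ℕ} (z : Fin d → ℂ) (k : Fin d → ℤ) : ℂ := ∏ i, z i ^ (k i)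

/-- `lam` is a complex eigenvalue of the integer matrix `M`. -/
def IsEig {d : ℕ} (M : Matrix (Fin d) (Fin d) ℤ) (lam : ℂ) : Prop :=
  ((M.map (Int.cast : ℤ → ℂ)).charpoly).IsRoot lam

/-- `ρ(M)`: the max over complex eigenvalues `λ` of `M` of `max |λ| |λ|⁻¹`,
i.e. the max of the spectral radii of `M` and `M⁻¹`. -/
def rhoM {d : ℕ} (M : Matrix (Fin d) (Fin d) ℤ) : ℝ :=
  sSup {r : ℝ | ∃ lam : ℂ, IsEig M lam ∧ r = max (‖lam‖) (‖lam‖)⁻¹}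

/-- A Reinhardt domain: a nonempty connected open set stable under coordinatewise
rotations. -/
def IsReinhardt {d : ℕ} (D : Set (Fin d → ℂ)) : Prop :=
  IsOpen D ∧ IsConnected D ∧
    ∀ z ∈ D, ∀ θ : Fin d → ℝ,
      (fun i => Complex.exp ((θ i : ℂ) * Complex.I) * z i) ∈ D

/-- A set `J ⊆ ℤ` has bounded gaps (not bigger than some `l`). -/
def BddGaps (J : Set ℤ) : Prop :=
  ∃ l : ℕ, ∀ j ∈ J, ∃ j' ∈ J, j' ≠ j ∧ |j - j'| ≤ (l : ℤ)

/-! Since `Re (cosh (u + iv)) = cosh u · cos v`, the modulus of `Ω` is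
`exp (-2 cos (t v) cosh (t u))` with `t = 2π²/m`, and on `S_m` we have `|t v| < π/2`, so the
cosine factor is positive. Doubly exponential decay along `w + ℤ` then follows from
`e^{t|u + j|} ≤ 2 cosh (t (u + j))` and the triangle inequality `|j| ≤ |u| + |u + j|`. -/

open Complex in
theorem Complex.re_cosh (z : ℂ) : (cosh z).re = Real.cosh z.re * Real.cos z.im := by
  have h := congrArg re (two_cosh z)
  simp only [mul_re, re_ofNat, im_ofNat, add_re, exp_re, neg_re, neg_im, Real.cos_neg] at h
  rw [Real.cosh_eq]
  linarith

theorem Complex.norm_exp_neg_two_mul_cosh (z : ℂ) :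
    ‖exp (-2 * cosh z)‖ = Real.exp (-2 * Real.cos z.im * Real.cosh z.re) := by
  simp only [norm_exp, neg_mul, neg_re, mul_re, re_ofNat, im_ofNat, zero_mul, sub_zero, re_cosh]
  ring_nf

theorem Complex.norm_exp_neg_two_mul_cosh_mul_div (a r : ℝ) (w : ℂ) :
    ‖exp (-2 * cosh (a * w / r))‖
      = Real.exp (-2 * Real.cos (a * w.im / r) * Real.cosh (a * w.re / r)) := by
  rw [norm_exp_neg_two_mul_cosh, div_ofReal_re, div_ofReal_im, re_ofReal_mul, im_ofReal_mul]

theorem cos_pos_of_mem_Sm {m : ℝ} (hm : 0 < m) {w : ℂ} (hw : w ∈ Sm m) :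
    0 < Real.cos (2 * Real.pi ^ 2 * w.im / m) := by
  refine Real.cos_pos_of_mem_Ioo (abs_lt.mp ?_)
  calc |2 * Real.pi ^ 2 * w.im / m| = 2 * Real.pi ^ 2 / m * |w.im| := by
        have hπ : 0 < 2 * Real.pi ^ 2 := by positivity
        rw [abs_div, abs_mul, abs_of_pos hm, abs_of_pos hπ]
        ring
    _ < 2 * Real.pi ^ 2 / m * (m / (4 * Real.pi)) := by gcongr; exact hw
    _ = Real.pi / 2 := by field_simp; ring

theorem Real.exp_neg_mul_abs_mul_exp_mul_abs_le_two_mul_cosh {t : ℝ} (ht : 0 ≤ t) (a x : ℝ) :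
    exp (-(t * |a|)) * exp (t * |x|) ≤ 2 * cosh (t * (a + x)) := by
  have hx : -(t * |a|) + t * |x| ≤ |t * (a + x)| := by
    rw [abs_mul, abs_of_nonneg ht]
    have : |x| ≤ |a| + |a + x| := by simpa using abs_add_le (-a) (a + x)
    nlinarith
  calc exp (-(t * |a|)) * exp (t * |x|) ≤ exp |t * (a + x)| := by
        rw [← exp_add]; gcongr
    _ ≤ 2 * cosh (t * (a + x)) := by
        rw [cosh_eq, mul_div_cancel₀ _ two_ne_zero]
        exact exp_abs_le _

theorem Real.exp_neg_two_mul_cosh_add_le {c t : ℝ} (hc : 0 ≤ c) (ht : 0 ≤ t) (a x : ℝ) :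
    exp (-2 * c * cosh (t * (a + x))) ≤ exp (-(c * exp (-(t * |a|))) * exp (t * |x|)) := by
  rw [exp_le_exp]
  nlinarith [mul_le_mul_of_nonneg_left (exp_neg_mul_abs_mul_exp_mul_abs_le_two_mul_cosh ht a x) hc]

/-- Properties of `Ω(w) = exp(−2 cosh(2π² w / m))` on the strip `S_m`: the formula for
`|Ω(w)|`, positivity of the cosine factor, and the resulting doubly exponential decay of
`|Ω(w+j)|` as `|j| → ∞`. -/
theorem stmt_13 (m : ℝ) (hm : 0 < m) (Ω : ℂ → ℂ)
    (hΩ : ∀ w : ℂ, Ω w = Complex.exp (-2 * Complex.cosh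
      ((2 * (Real.pi : ℂ) ^ 2) * w / (m : ℂ)))) :
    (∀ w ∈ Sm m,
      ‖Ω w‖ = Real.exp (-2 * Real.cos (2 * Real.pi ^ 2 * w.im / m)
          * Real.cosh (2 * Real.pi ^ 2 * w.re / m)) ∧
      0 < Real.cos (2 * Real.pi ^ 2 * w.im / m)) ∧
    (∀ w ∈ Sm m, ∃ β > (0 : ℝ), ∃ C > (0 : ℝ), ∀ j : ℤ,
      ‖Ω (w + (j : ℂ))‖
        ≤ C * Real.exp (-β * Real.exp ((2 * Real.pi ^ 2 / m) * |(j : ℝ)|))) := by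
  have hnorm (w : ℂ) : ‖Ω w‖ = Real.exp (-2 * Real.cos (2 * Real.pi ^ 2 * w.im / m)
      * Real.cosh (2 * Real.pi ^ 2 * w.re / m)) := by
    rw [hΩ, ← Complex.norm_exp_neg_two_mul_cosh_mul_div]
    push_cast
    rfl
  refine ⟨fun w hw => ⟨hnorm w, cos_pos_of_mem_Sm hm hw⟩, fun w hw => ?_⟩
  set t := 2 * Real.pi ^ 2 / m
  set c := Real.cos (2 * Real.pi ^ 2 * w.im / m)
  have hc : 0 < c := cos_pos_of_mem_Sm hm hw
  refine ⟨c * Real.exp (-(t * |w.re|)), by positivity, 1, one_pos, fun j => ?_⟩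
  have hre : 2 * Real.pi ^ 2 * (w + j).re / m = t * (w.re + j) := by
    rw [Complex.add_re, Complex.intCast_re, mul_div_right_comm]
  rw [one_mul, hnorm, Complex.add_im, Complex.intCast_im, add_zero, hre]
  exact Real.exp_neg_two_mul_cosh_add_le hc.le (by positivity) w.re j
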